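/- arXiv:2002.06621 — 3 statements merged into one kernel-verified Lean document; each statement's English description precedes it below -/
import Mathlib

section
/- Let D : ℝ → ℝ^{m×n} be a matrix-valued function differentiable at t₀ = 0. Suppose σ : ℝ → ℝ, u : ℝ → ℝ^m and v : ℝ → ℝ^n are differentiable at 0 and satisfy, for all t in a neighborhood of 0: ‖u(t)‖₂ = ‖v(t)‖₂ = 1, D(t) v(t) = σ(t) u(t), and D(t)ᵀ u(t) = σ(t) v(t). Then σ'(0) = u(0)ᵀ D'(0) v(0). -/
open Matrix

/-- Derivative of a singular value along a differentiable matrix path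
(Lemma 1 of the paper). -/
theorem singular_value_derivative (m n : ℕ)
    (D : ℝ → Matrix (Fin m) (Fin n) ℝ) (D' : Matrix (Fin m) (Fin n) ℝ)
    (σ : ℝ → ℝ) (σ' : ℝ)
    (u : ℝ → Fin m → ℝ) (v : ℝ → Fin n → ℝ)
    (hD : ∀ i j, HasDerivAt (fun t => D t i j) (D' i j) 0)
    (hσ : HasDerivAt σ σ' 0)
    (hu : ∀ i, DifferentiableAt ℝ (fun t => u t i) 0)
    (hv : ∀ j, DifferentiableAt ℝ (fun t => v t j) 0)
    (hloc : ∀ᶠ t in nhds (0 : ℝ),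
      Real.sqrt (∑ i, u t i ^ 2) = 1 ∧
      Real.sqrt (∑ j, v t j ^ 2) = 1 ∧
      (D t).mulVec (v t) = σ t • u t ∧
      (D t)ᵀ.mulVec (u t) = σ t • v t) :
    σ' = ∑ i, ∑ j, u 0 i * (D' i j * v 0 j) := by
  classical
  set u' : Fin m → ℝ := fun i => deriv (fun t => u t i) 0 with hu'def
  set v' : Fin n → ℝ := fun j => deriv (fun t => v t j) 0 with hv'def
  have hu' : ∀ i, HasDerivAt (fun t => u t i) (u' i) 0 := fun i => (hu i).hasDerivAt
  have hv' : ∀ j, HasDerivAt (fun t => v t j) (v' j) 0 := fun j => (hv j).hasDerivAt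
  obtain ⟨h1₀, h2₀, h3₀, h4₀⟩ := hloc.self_of_nhds
  -- eventual norm facts
  have husq : (fun t => ∑ i, u t i ^ 2) =ᶠ[nhds (0:ℝ)] fun _ => (1:ℝ) := by
    filter_upwards [hloc] with t ht
    exact Real.sqrt_eq_one.mp ht.1
  have hvsq : (fun t => ∑ j, v t j ^ 2) =ᶠ[nhds (0:ℝ)] fun _ => (1:ℝ) := by
    filter_upwards [hloc] with t ht
    exact Real.sqrt_eq_one.mp ht.2.1
  -- orthogonality of derivative of unit vectors
  have hgu : HasDerivAt (fun t => ∑ i, u t i ^ 2) (∑ i, (2:ℕ) * u 0 i ^ 1 * u' i) 0 :=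
    HasDerivAt.fun_sum fun i _ => (hu' i).pow 2
  have hgu0 : (∑ i, (2:ℕ) * u 0 i ^ 1 * u' i) = 0 :=
    hgu.unique ((hasDerivAt_const 0 (1:ℝ)).congr_of_eventuallyEq husq)
  have hou : (∑ i, u 0 i * u' i) = 0 := by
    have : (∑ i, (2:ℕ) * u 0 i ^ 1 * u' i) = 2 * ∑ i, u 0 i * u' i := by
      rw [Finset.mul_sum]
      exact Finset.sum_congr rfl fun i _ => by push_cast; ring
    rw [this] at hgu0
    linarith
  have hgv : HasDerivAt (fun t => ∑ j, v t j ^ 2) (∑ j, (2:ℕ) * v 0 j ^ 1 * v' j) 0 :=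
    HasDerivAt.fun_sum fun j _ => (hv' j).pow 2
  have hgv0 : (∑ j, (2:ℕ) * v 0 j ^ 1 * v' j) = 0 :=
    hgv.unique ((hasDerivAt_const 0 (1:ℝ)).congr_of_eventuallyEq hvsq)
  have hov : (∑ j, v 0 j * v' j) = 0 := by
    have : (∑ j, (2:ℕ) * v 0 j ^ 1 * v' j) = 2 * ∑ j, v 0 j * v' j := by
      rw [Finset.mul_sum]
      exact Finset.sum_congr rfl fun j _ => by push_cast; ring
    rw [this] at hgv0
    linarith
  -- the Rayleigh-like function
  have hf : HasDerivAt (fun t => ∑ i, ∑ j, u t i * (D t i j * v t j))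
      (∑ i, ∑ j, (u' i * (D 0 i j * v 0 j)
        + u 0 i * (D' i j * v 0 j + D 0 i j * v' j))) 0 :=
    HasDerivAt.fun_sum fun i _ => HasDerivAt.fun_sum fun j _ =>
      (hu' i).mul ((hD i j).mul (hv' j))
  have hfeq : σ =ᶠ[nhds (0:ℝ)] fun t => ∑ i, ∑ j, u t i * (D t i j * v t j) := by
    filter_upwards [hloc] with t ht
    obtain ⟨ht1, ht2, ht3, ht4⟩ := ht
    have hsum : (∑ i, u t i ^ 2) = 1 := Real.sqrt_eq_one.mp ht1
    have : ∑ i, ∑ j, u t i * (D t i j * v t j)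
        = ∑ i, u t i * ((D t).mulVec (v t) i) := by
      simp [Matrix.mulVec, dotProduct, Finset.mul_sum]
    rw [this, ht3]
    calc σ t = σ t * ∑ i, u t i ^ 2 := by rw [hsum, mul_one]
      _ = ∑ i, u t i * (σ t • u t) i := by
          rw [Finset.mul_sum]
          exact Finset.sum_congr rfl fun i _ => by
            simp [Pi.smul_apply, smul_eq_mul]; ring
  have hσF : σ' = ∑ i, ∑ j, (u' i * (D 0 i j * v 0 j)
        + u 0 i * (D' i j * v 0 j + D 0 i j * v' j)) :=
    hσ.unique (hf.congr_of_eventuallyEq hfeq)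
  -- split the sum
  have hsplit : σ' = (∑ i, ∑ j, u' i * (D 0 i j * v 0 j))
      + (∑ i, ∑ j, u 0 i * (D' i j * v 0 j))
      + (∑ i, ∑ j, u 0 i * (D 0 i j * v' j)) := by
    rw [hσF]
    rw [← Finset.sum_add_distrib, ← Finset.sum_add_distrib]
    exact Finset.sum_congr rfl fun i _ => by
      rw [← Finset.sum_add_distrib, ← Finset.sum_add_distrib]
      exact Finset.sum_congr rfl fun j _ => by ring
  have hterm1 : (∑ i, ∑ j, u' i * (D 0 i j * v 0 j)) = 0 := by
    have : (∑ i, ∑ j, u' i * (D 0 i j * v 0 j))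
        = ∑ i, u' i * ((D 0).mulVec (v 0) i) := by
      simp [Matrix.mulVec, dotProduct, Finset.mul_sum]
    rw [this, h3₀]
    calc ∑ i, u' i * (σ 0 • u 0) i = σ 0 * ∑ i, u 0 i * u' i := by
          rw [Finset.mul_sum]
          exact Finset.sum_congr rfl fun i _ => by
            simp [Pi.smul_apply, smul_eq_mul]; ring
      _ = 0 := by rw [hou, mul_zero]
  have hterm3 : (∑ i, ∑ j, u 0 i * (D 0 i j * v' j)) = 0 := by
    rw [Finset.sum_comm]
    have : (∑ j, ∑ i, u 0 i * (D 0 i j * v' j))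
        = ∑ j, ((D 0)ᵀ.mulVec (u 0) j) * v' j := by
      refine Finset.sum_congr rfl fun j _ => ?_
      simp [Matrix.mulVec, dotProduct, Matrix.transpose_apply, Finset.sum_mul]
      exact Finset.sum_congr rfl fun i _ => by ring
    rw [this, h4₀]
    calc ∑ j, (σ 0 • v 0) j * v' j = σ 0 * ∑ j, v 0 j * v' j := by
          rw [Finset.mul_sum]
          exact Finset.sum_congr rfl fun j _ => by
            simp [Pi.smul_apply, smul_eq_mul]; ring
      _ = 0 := by rw [hov, mul_zero]
  rw [hsplit, hterm1, hterm3, zero_add, add_zero]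
end

section
/- Let m ≤ n, T = m + n − 1, p ∈ ℝ^T and H = H_m(p). Suppose σ > 0, u ∈ ℝ^m, v ∈ ℝ^n satisfy ‖u‖₂ = ‖v‖₂ = 1, H v = σ u and Hᵀ u = σ v. Then P_H(u vᵀ) ≠ 0, where P_H denotes the orthogonal projection onto the subspace of m×n Hankel matrices with respect to the Frobenius inner product. -/
open Matrix

/-- The `m × n` Hankel matrix of a vector `p ∈ ℝ^(m+n-1)`: the `(i,j)` entry is
`p (i+j)` (0-based indexing). -/
def hankel (m n : ℕ) (p : Fin (m + n - 1) → ℝ) : Matrix (Fin m) (Fin n) ℝ :=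
  Matrix.of fun i j => p ⟨i.val + j.val, by have := i.isLt; have := j.isLt; omega⟩

/-- A matrix is Hankel if it is `hankel m n r` for some vector `r`. -/
def IsHankel {m n : ℕ} (X : Matrix (Fin m) (Fin n) ℝ) : Prop :=
  ∃ r : Fin (m + n - 1) → ℝ, X = hankel m n r

/-- Frobenius inner product. -/
def frobInner {m n : ℕ} (A B : Matrix (Fin m) (Fin n) ℝ) : ℝ :=
  ∑ i, ∑ j, A i j * B i j

/-- Frobenius norm. -/
noncomputable def frobNorm {m n : ℕ} (A : Matrix (Fin m) (Fin n) ℝ) : ℝ :=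
  Real.sqrt (∑ i, ∑ j, A i j ^ 2)

/-- Number of entries on the `k`-th anti-diagonal of an `m × n` matrix
(0-based: pairs `(i,j)` with `i + j = k`). -/
def adCount (m n k : ℕ) : ℕ :=
  ∑ i : Fin m, ∑ j : Fin n, if i.val + j.val = k then 1 else 0

/-- The vector of anti-diagonal averages of a matrix `B`. -/
noncomputable def adAvg {m n : ℕ} (B : Matrix (Fin m) (Fin n) ℝ) : Fin (m + n - 1) → ℝ :=
  fun k => (1 / (adCount m n k.val : ℝ)) *
    ∑ i, ∑ j, if i.val + j.val = k.val then B i j else 0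

/-- The orthogonal projection of `B` onto the subspace of `m × n` Hankel matrices
with respect to the Frobenius inner product: averaging along anti-diagonals. -/
noncomputable def projH {m n : ℕ} (B : Matrix (Fin m) (Fin n) ℝ) :
    Matrix (Fin m) (Fin n) ℝ :=
  hankel m n (adAvg B)

lemma adCount_pos {m n k : ℕ} (hm : 0 < m) (hn : 0 < n) (hk : k < m + n - 1) :
    0 < adCount m n k := by
  have hi : min k (m-1) < m := by omega
  have hj : k - min k (m-1) < n := by omega
  unfold adCount
  apply Finset.sum_pos' (fun i _ => Finset.sum_nonneg fun j _ => by positivity)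
  refine ⟨⟨min k (m-1), hi⟩, Finset.mem_univ _, ?_⟩
  apply Finset.sum_pos' (fun j _ => by positivity)
  exact ⟨⟨k - min k (m-1), hj⟩, Finset.mem_univ _, by
    have h : min k (m-1) + (k - min k (m-1)) = k := by omega
    simp [h]⟩

lemma regroup {m n : ℕ} (hm : 0 < m) (hn : 0 < n) (F : Fin m → Fin n → ℝ) :
    ∑ i, ∑ j, F i j
      = ∑ k : Fin (m + n - 1), ∑ i, ∑ j, if i.val + j.val = k.val then F i j else 0 := by
  symm
  rw [Finset.sum_comm]
  refine Finset.sum_congr rfl fun i _ => ?_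
  rw [Finset.sum_comm]
  refine Finset.sum_congr rfl fun j _ => ?_
  have hlt : i.val + j.val < m + n - 1 := by have := i.isLt; have := j.isLt; omega
  have : ∀ k : Fin (m+n-1), (if i.val + j.val = k.val then F i j else 0)
      = if k = ⟨i.val + j.val, hlt⟩ then F i j else 0 := by
    intro k; congr 1; simp [Fin.ext_iff, eq_comm]
  simp_rw [this]
  simp

lemma frob_hankel {m n : ℕ} (hm : 0 < m) (hn : 0 < n) (p : Fin (m+n-1) → ℝ)
    (B : Matrix (Fin m) (Fin n) ℝ) :
    frobInner (hankel m n p) B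
      = ∑ k : Fin (m+n-1), p k * ∑ i, ∑ j, if i.val + j.val = k.val then B i j else 0 := by
  unfold frobInner
  rw [regroup hm hn]
  refine Finset.sum_congr rfl fun k _ => ?_
  rw [Finset.mul_sum]
  refine Finset.sum_congr rfl fun i _ => ?_
  rw [Finset.mul_sum]
  refine Finset.sum_congr rfl fun j _ => ?_
  split_ifs with h
  · simp only [hankel, Matrix.of_apply]
    congr 1
    congr 1
    exact Fin.ext h
  · ring

lemma frob_projH {m n : ℕ} (hm : 0 < m) (hn : 0 < n) (p : Fin (m+n-1) → ℝ)
    (B : Matrix (Fin m) (Fin n) ℝ) :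
    frobInner (hankel m n p) (projH B) = frobInner (hankel m n p) B := by
  rw [frob_hankel hm hn, frob_hankel hm hn]
  refine Finset.sum_congr rfl fun k _ => ?_
  congr 1
  have hcount : (adCount m n k.val : ℝ) ≠ 0 := by
    exact_mod_cast (adCount_pos hm hn k.isLt).ne'
  have : ∀ (i : Fin m) (j : Fin n),
      (if i.val + j.val = k.val then projH B i j else 0)
        = if i.val + j.val = k.val then adAvg B k else 0 := by
    intro i j
    split_ifs with h
    · simp only [projH, hankel, Matrix.of_apply]
      congr 1
      exact Fin.ext h
    · rfl
  simp_rw [this]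
  have : ∀ (i : Fin m) (j : Fin n),
      (if i.val + j.val = k.val then adAvg B k else 0)
        = ((if i.val + j.val = k.val then (1:ℝ) else 0)) * adAvg B k := by
    intro i j; split_ifs <;> ring
  simp_rw [this, ← Finset.sum_mul]
  have hsum : (∑ i : Fin m, ∑ j : Fin n, if i.val + j.val = k.val then (1:ℝ) else 0)
      = (adCount m n k.val : ℝ) := by
    unfold adCount; push_cast; simp
  rw [hsum]
  unfold adAvg
  field_simp

/-- Lemma 3 of the paper: if `σ > 0` is a singular value of the Hankel matrix
`H_m(p)` with unit singular vectors `u, v`, then `P_H(u vᵀ) ≠ 0`. -/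
theorem projH_ne_zero (m n : ℕ) (hmn : m ≤ n)
    (p : Fin (m + n - 1) → ℝ) (σ : ℝ) (u : Fin m → ℝ) (v : Fin n → ℝ)
    (hσ : 0 < σ)
    (hu : Real.sqrt (∑ i, u i ^ 2) = 1)
    (hv : Real.sqrt (∑ j, v j ^ 2) = 1)
    (h1 : (hankel m n p).mulVec v = σ • u)
    (h2 : (hankel m n p)ᵀ.mulVec u = σ • v) :
    projH (Matrix.vecMulVec u v) ≠ 0 := by
  have hm : 0 < m := by
    rcases Nat.eq_zero_or_pos m with h | h
    · subst h; simp at hu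
    · exact h
  have hn : 0 < n := lt_of_lt_of_le hm hmn
  have hu2 : ∑ i, u i ^ 2 = 1 := by
    have hnn : (0:ℝ) ≤ ∑ i, u i ^ 2 := Finset.sum_nonneg fun i _ => sq_nonneg _
    nlinarith [Real.sq_sqrt hnn]
  have key : frobInner (hankel m n p) (Matrix.vecMulVec u v) = σ := by
    unfold frobInner
    have hrow : ∀ i, (∑ j, hankel m n p i j * Matrix.vecMulVec u v i j)
        = u i * (hankel m n p).mulVec v i := by
      intro i
      rw [Matrix.mulVec, dotProduct, Finset.mul_sum]
      refine Finset.sum_congr rfl fun j _ => ?_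
      simp [Matrix.vecMulVec_apply]; ring
    simp_rw [hrow, h1, Pi.smul_apply, smul_eq_mul]
    have : (∑ i, u i * (σ * u i)) = σ * ∑ i, u i ^ 2 := by
      rw [Finset.mul_sum]
      exact Finset.sum_congr rfl fun i _ => by ring
    rw [this, hu2, mul_one]
  intro hcontra
  have h0 : frobInner (hankel m n p) (projH (Matrix.vecMulVec u v)) = 0 := by
    rw [hcontra]; unfold frobInner; simp
  rw [frob_projH hm hn, key] at h0
  exact hσ.ne' h0
end

section
/- Let m ≤ n, T = m + n − 1, p ∈ ℝ^T, ε ∈ ℝ. Let δ : ℝ → ℝ^T be differentiable at t₀, let σ(t₀) > 0, u ∈ ℝ^m, v ∈ ℝ^n satisfy ‖u‖₂ = ‖v‖₂ = 1, H_m(p + ε δ(t₀)) v = σ(t₀) u and H_m(p + ε δ(t₀))ᵀ u = σ(t₀) v, and let q ∈ ℝ^T be the vector with P_H(uvᵀ) = H_m(q). Suppose δ satisfies the free dynamics δ'(t₀) = −q and σ is differentiable at t₀ with σ'(t₀) = c · ⟨q, δ'(t₀)⟩ for some constant c > 0. Then σ'(t₀) = −c ‖q‖₂² < 0. -/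
open Matrix

/-- Standard Euclidean inner product on `ℝ^T`. -/
def dot {T : ℕ} (x y : Fin T → ℝ) : ℝ := ∑ i, x i * y i

/-- Strict decrease of the smallest singular value along the free (unconstrained)
gradient dynamics (equation (7) of the paper): if `σ(t₀) > 0` and
`δ'(t₀) = -q` where `H_m(q) = P_H(u vᵀ)`, then `σ'(t₀) = -c ‖q‖₂² < 0`. -/
theorem free_dynamics_strict_decrease (m n : ℕ) (hmn : m ≤ n)
    (p : Fin (m + n - 1) → ℝ) (ε : ℝ)
    (δ : ℝ → Fin (m + n - 1) → ℝ) (t₀ : ℝ) (δ' : Fin (m + n - 1) → ℝ)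
    (hd : ∀ k, HasDerivAt (fun t => δ t k) (δ' k) t₀)
    (σ : ℝ → ℝ) (σ' : ℝ) (hσd : HasDerivAt σ σ' t₀) (hσpos : 0 < σ t₀)
    (u : Fin m → ℝ) (v : Fin n → ℝ)
    (hu : Real.sqrt (∑ i, u i ^ 2) = 1)
    (hv : Real.sqrt (∑ j, v j ^ 2) = 1)
    (h1 : (hankel m n (fun k => p k + ε * δ t₀ k)).mulVec v = σ t₀ • u)
    (h2 : (hankel m n (fun k => p k + ε * δ t₀ k))ᵀ.mulVec u = σ t₀ • v)
    (q : Fin (m + n - 1) → ℝ) (hq : hankel m n q = projH (Matrix.vecMulVec u v))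
    (hfree : δ' = fun k => -q k)
    (c : ℝ) (hc : 0 < c) (hform : σ' = c * dot q δ') :
    σ' = -c * ∑ k, q k ^ 2 ∧ σ' < 0 := by
  -- basic facts
  have hm : 1 ≤ m := by
    by_contra h
    interval_cases m
    simp at hu
  have hn : 1 ≤ n := by
    by_contra h
    interval_cases n
    simp at hv
  have hu2 : (∑ i, u i ^ 2) = 1 := by
    have h0 : (0:ℝ) ≤ ∑ i, u i ^ 2 := Finset.sum_nonneg fun i _ => sq_nonneg _
    nlinarith [Real.sq_sqrt h0, hu]
  -- q = adAvg (vecMulVec u v)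
  have hq0 : q = adAvg (Matrix.vecMulVec u v) := by
    funext k
    have hk := k.isLt
    have hi : min k.val (m-1) < m := by omega
    have hj : k.val - min k.val (m-1) < n := by omega
    have := congrFun (congrFun hq ⟨min k.val (m-1), hi⟩) ⟨k.val - min k.val (m-1), hj⟩
    simp only [hankel, projH, Matrix.of_apply] at this
    have hke : (⟨min k.val (m-1) + (k.val - min k.val (m-1)), by omega⟩ : Fin (m+n-1)) = k := by
      apply Fin.ext
      show min k.val (m-1) + (k.val - min k.val (m-1)) = k.val
      omega
    rwa [hke] at this
  set a : Fin (m + n - 1) → ℝ := fun k => p k + ε * δ t₀ k with ha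
  set S : Fin (m + n - 1) → ℝ :=
    fun k => ∑ i, ∑ j, if i.val + j.val = k.val then u i * v j else 0 with hSdef
  have hS : ∀ k, S k = (adCount m n k.val : ℝ) * q k := by
    intro k
    rw [hq0]
    simp only [adAvg, Matrix.vecMulVec_apply]
    by_cases hcz : adCount m n k.val = 0
    · rw [hcz]
      simp only [Nat.cast_zero, zero_mul]
      have hall : ∀ i : Fin m, ∀ j : Fin n, ¬ (i.val + j.val = k.val) := by
        intro i j hij
        have h1' : 1 ≤ ∑ j' : Fin n, if i.val + j'.val = k.val then 1 else 0 := by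
          have := Finset.single_le_sum
            (f := fun j' : Fin n => if i.val + j'.val = k.val then (1:ℕ) else 0)
            (fun _ _ => Nat.zero_le _) (Finset.mem_univ j)
          simpa [hij] using this
        have h2' : (∑ j' : Fin n, if i.val + j'.val = k.val then 1 else 0)
            ≤ adCount m n k.val := by
          exact Finset.single_le_sum (f := fun i' : Fin m =>
            ∑ j' : Fin n, if i'.val + j'.val = k.val then 1 else 0)
            (fun _ _ => Nat.zero_le _) (Finset.mem_univ i)
        omega
      simp only [hSdef]
      exact Finset.sum_eq_zero fun i _ => Finset.sum_eq_zero fun j _ => by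
        simp [hall i j]
    · have : (adCount m n k.val : ℝ) ≠ 0 := Nat.cast_ne_zero.mpr hcz
      field_simp
      rfl
  -- compute A two ways
  have hA1 : (∑ i, u i * (hankel m n a).mulVec v i) = σ t₀ := by
    rw [h1]
    simp only [Pi.smul_apply, smul_eq_mul]
    calc (∑ i, u i * (σ t₀ * u i)) = σ t₀ * ∑ i, u i ^ 2 := by
          rw [Finset.mul_sum]; apply Finset.sum_congr rfl; intros; ring
      _ = σ t₀ := by rw [hu2, mul_one]
  have key : ∀ (i : Fin m) (j : Fin n),
      (∑ k : Fin (m+n-1), if i.val + j.val = k.val then a k * (u i * v j) else 0)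
      = a ⟨i.val + j.val, by omega⟩ * (u i * v j) := by
    intro i j
    have : (∑ k : Fin (m+n-1), if i.val + j.val = k.val then a k * (u i * v j) else 0)
        = ∑ k : Fin (m+n-1), if k = ⟨i.val + j.val, by omega⟩
            then a k * (u i * v j) else 0 := by
      refine Finset.sum_congr rfl fun k _ => ?_
      refine if_congr ?_ rfl rfl
      constructor
      · intro h; exact Fin.ext h.symm
      · intro h; rw [h]
    rw [this, Finset.sum_ite_eq' Finset.univ]
    simp
  have hA2 : (∑ i, u i * (hankel m n a).mulVec v i) = ∑ k, a k * S k := by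
    have hR : ∑ k, a k * S k
        = ∑ i, ∑ j, a ⟨i.val + j.val, by omega⟩ * (u i * v j) := by
      simp only [hSdef, Finset.mul_sum, mul_ite, mul_zero]
      rw [Finset.sum_comm]
      refine Finset.sum_congr rfl fun i _ => ?_
      rw [Finset.sum_comm]
      refine Finset.sum_congr rfl fun j _ => key i j
    rw [hR]
    simp only [Matrix.mulVec, dotProduct, hankel, Matrix.of_apply, Finset.mul_sum]
    refine Finset.sum_congr rfl fun i _ => Finset.sum_congr rfl fun j _ => ?_
    ring
  -- q ≠ 0
  have hqsum : 0 < ∑ k, q k ^ 2 := by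
    rcases lt_or_eq_of_le (Finset.sum_nonneg fun k _ => sq_nonneg (q k)) with h | h
    · exact h
    · exfalso
      have hq0' : ∀ k, q k = 0 := by
        intro k
        have := (Finset.sum_eq_zero_iff_of_nonneg
          (fun k _ => sq_nonneg (q k))).mp h.symm k (Finset.mem_univ k)
        exact pow_eq_zero_iff (by norm_num) |>.mp this
      have : σ t₀ = 0 := by
        rw [← hA1, hA2]
        apply Finset.sum_eq_zero
        intro k _
        rw [hS k, hq0' k]
        ring
      linarith
  constructor
  · rw [hform, hfree]
    simp only [dot]
    rw [Finset.mul_sum, neg_mul, Finset.mul_sum, ← Finset.sum_neg_distrib]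
    apply Finset.sum_congr rfl
    intros; ring
  · rw [hform, hfree]
    have : dot q (fun k => -q k) = -∑ k, q k ^ 2 := by
      simp only [dot, ← Finset.sum_neg_distrib]
      apply Finset.sum_congr rfl; intros; ring
    rw [this]
    nlinarith
end
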